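/- If a, b, c, u are elements of the positive unit ball of a C*-algebra with c = (a+b)/2, then ‖a - au‖² ≤ 2‖c - cu‖. -/
import Mathlib

open Complex

section StarModuleAux

variable {A : Type*} [NonUnitalNormedRing A] [StarRing A] [CStarRing A]
    [NormedSpace ℂ A] [IsScalarTower ℂ A A] [SMulCommClass ℂ A A]
    [PartialOrder A] [StarOrderedRing A]

/-- In a C*-normed ring, an element annihilating everything on the left is zero. -/
private lemma aux_faithful {w : A} (h : ∀ y : A, w * y = 0) : w = 0 := by
  have h1 : ‖star w‖ * ‖star w‖ = 0 := by
    rw [← CStarRing.norm_star_mul_self, star_star, h (star w), norm_zero]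
  have h2 : star w = 0 := norm_eq_zero.mp (mul_self_eq_zero.mp h1)
  simpa using congrArg star h2

private lemma aux_key (x y : A) : star (I • star x) * y = x * star (I • star y) := by
  have h1 : star (I • (star y * star x)) = star (I • star x) * y := by
    rw [← mul_smul_comm, star_mul, star_star]
  have h2 : star (I • (star y * star x)) = x * star (I • star y) := by
    rw [← smul_mul_assoc, star_mul, star_star]
  rw [← h1, h2]

private lemma aux_key2 (x : A) : star (I • star (I • x)) = I • star (I • star x) := by
  rw [← sub_eq_zero]
  apply aux_faithful
  intro y
  have h1 : star (I • star (I • x)) * y = (I • x) * star (I • star y) := aux_key _ y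
  have h2 : (I • x) * star (I • star y) = (I • star (I • star x)) * y := by
    rw [smul_mul_assoc, ← aux_key x y, ← smul_mul_assoc]
  rw [sub_mul, h1, h2, sub_self]

private lemma aux_key3 (x : A) : I • star (I • star x) = x := by
  set w : A := x - I • star (I • star x) with hw
  -- `M (M z) = z` where `M z = I • star (I • star z)`
  have hMM : ∀ z : A, I • star (I • star (I • star (I • star z))) = z := by
    intro z
    have e1 : star (I • star (I • star (I • star z)))
        = I • star (I • star (star (I • star z))) := aux_key2 (star (I • star z))
    have e2 : star (I • star (star (I • star z))) = -z := by
      rw [star_star, smul_smul, I_mul_I, neg_one_smul, star_neg, star_star]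
    rw [e1, e2, smul_neg, smul_neg, smul_smul, I_mul_I, neg_one_smul, neg_neg]
  have hMw : I • star (I • star w) = -w := by
    have h : I • star (I • star w)
        = I • star (I • star x) - I • star (I • star (I • star (I • star x))) := by
      rw [hw, star_sub, smul_sub, star_sub, smul_sub]
    rw [h, hMM x, hw, neg_sub]
  -- hence `star (I • star w) = I • w`
  have hLw : star (I • star w) = I • w := by
    have h := congrArg (fun t => I • t) hMw
    simp only [smul_smul, I_mul_I, neg_one_smul, smul_neg] at h
    exact neg_inj.mp h
  -- positivity argument: `star w * w = 0`
  have hsw : I • star w = star (I • w) := by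
    have h := congrArg star hLw
    rw [star_star] at h
    exact h
  have hp : (0 : A) ≤ star w * w := star_mul_self_nonneg w
  have hq : (0 : A) ≤ star (I • w) * (I • w) := star_mul_self_nonneg _
  have hq' : star (I • w) * (I • w) = -(star w * w) := by
    rw [← hsw, smul_mul_assoc, mul_smul_comm, smul_smul, I_mul_I, neg_one_smul]
  have hp0 : star w * w = 0 := le_antisymm (by rw [hq'] at hq; exact neg_nonneg.mp hq) hp
  have hw0 : w = 0 := by
    have h : ‖w‖ * ‖w‖ = 0 := by rw [← CStarRing.norm_star_mul_self, hp0, norm_zero]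
    exact norm_eq_zero.mp (mul_self_eq_zero.mp h)
  rw [hw] at hw0
  exact (sub_eq_zero.mp hw0).symm

private lemma aux_star_I_smul (x : A) : star (I • x) = (-I) • star x := by
  have h := aux_key3 (star x)
  rw [star_star] at h
  have := congrArg (fun z => (-I) • z) h
  simpa [smul_smul] using this

private lemma aux_starModule : StarModule ℂ A where
  star_smul z x := by
    have hre : ∀ (r : ℝ) (y : A), star ((r : ℂ) • y) = (r : ℂ) • star y := by
      intro r y
      rw [Complex.coe_smul, Complex.coe_smul]
      exact map_real_smul (starAddEquiv (R := A)) continuous_star r y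
    have hz : z = (z.re : ℂ) + (z.im : ℂ) * I := (Complex.re_add_im z).symm
    have hzdecomp : z • x = (z.re : ℂ) • x + (z.im : ℂ) • (I • x) := by
      nth_rw 1 [hz]
      rw [add_smul, mul_smul]
    rw [hzdecomp, star_add, hre, hre, aux_star_I_smul]
    have : star z = (z.re : ℂ) + (z.im : ℂ) * (-I) := by
      rw [Complex.star_def]
      apply Complex.ext <;> simp
    rw [this, add_smul, mul_smul]

end StarModuleAux

/-- If `a, b, c, u` are in the positive unit ball of a C*-algebra with `c = (a+b)/2`,
then `‖a - a*u‖² ≤ 2‖c - c*u‖`. -/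
theorem stmt_1 {A : Type*} [NonUnitalNormedRing A] [StarRing A] [CStarRing A]
    [NormedSpace ℂ A] [IsScalarTower ℂ A A] [SMulCommClass ℂ A A]
    [PartialOrder A] [StarOrderedRing A] [CompleteSpace A]
    (a b c u : A) (ha : 0 ≤ a) (hna : ‖a‖ ≤ 1) (hb : 0 ≤ b) (hnb : ‖b‖ ≤ 1)
    (hu : 0 ≤ u) (hnu : ‖u‖ ≤ 1) (hc : 0 ≤ c) (hnc : ‖c‖ ≤ 1)
    (hcab : c = (2⁻¹ : ℂ) • (a + b)) :
    ‖a - a * u‖ ^ 2 ≤ 2 * ‖c - c * u‖ := by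
  letI : StarModule ℂ A := aux_starModule
  letI : NonUnitalCStarAlgebra A :=
    { toNonUnitalNormedRing := ‹_›
      toStarRing := ‹_›
      toCompleteSpace := ‹_›
      toCStarRing := ‹_›
      toNormedSpace := ‹_›
      toIsScalarTower := ‹_›
      toSMulCommClass := ‹_›
      toStarModule := ‹_› }
  -- `a ≤ c + c`
  have hacc : a ≤ c + c := by
    have h2c : c + c = a + b := by
      rw [hcab, ← add_smul]
      norm_num
    rw [h2c]
    exact le_add_of_nonneg_right hb
  -- move to the unitization
  let B := Unitization ℂ A
  let x : B := (a : B)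
  let y : B := (c : B)
  let v : B := 1 - (u : B)
  have hu01 : (u : B) ∈ Set.Icc (0 : B) 1 :=
    CStarAlgebra.inr_mem_Icc_iff_norm_le.mpr ⟨hu, hnu⟩
  have hx01 : x ∈ Set.Icc (0 : B) 1 :=
    CStarAlgebra.inr_mem_Icc_iff_norm_le.mpr ⟨ha, hna⟩
  have hv0 : (0 : B) ≤ v := sub_nonneg.mpr hu01.2
  have hv1 : v ≤ 1 := sub_le_self 1 hu01.1
  have hvsa : star v = v := (IsSelfAdjoint.of_nonneg hv0).star_eq
  have hxsa : star x = x := (IsSelfAdjoint.of_nonneg hx01.1).star_eq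
  have hnv : ‖v‖ ≤ 1 := (CStarAlgebra.norm_le_one_iff_of_nonneg v hv0).mpr hv1
  have hav : x * v = ((a - a * u : A) : B) := by
    show (a : B) * (1 - (u : B)) = _
    rw [mul_sub, mul_one, Unitization.inr_sub, Unitization.inr_mul]
  have hcv : y * v = ((c - c * u : A) : B) := by
    show (c : B) * (1 - (u : B)) = _
    rw [mul_sub, mul_one, Unitization.inr_sub, Unitization.inr_mul]
  have hna' : ‖a - a * u‖ = ‖x * v‖ := by
    rw [hav, Unitization.norm_inr]
  have hnc' : ‖c - c * u‖ = ‖y * v‖ := by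
    rw [hcv, Unitization.norm_inr]
  -- `‖x * v‖ ^ 2 = ‖v * (x * x) * v‖`
  have hsq : ‖x * v‖ ^ 2 = ‖v * (x * x) * v‖ := by
    rw [sq, ← CStarRing.norm_star_mul_self]
    congr 1
    rw [star_mul, hvsa, hxsa]
    noncomm_ring
  -- `x * x ≤ x`
  have hxx : x * x ≤ x := by
    have := CStarAlgebra.pow_antitone hx01.1 hx01.2 (one_le_two : (1 : ℕ) ≤ 2)
    simpa [pow_two] using this
  -- `x ≤ y + y`
  have hxyy : x ≤ y + y := by
    have := (Unitization.inr_le_iff a (c + c) (IsSelfAdjoint.of_nonneg ha)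
      (IsSelfAdjoint.of_nonneg (add_nonneg hc hc))).mpr hacc
    rwa [Unitization.inr_add] at this
  -- conjugations
  have hconj1 : v * (x * x) * v ≤ v * x * v := by
    have := star_left_conjugate_le_conjugate hxx v
    rwa [hvsa] at this
  have hconj2 : v * x * v ≤ v * y * v + v * y * v := by
    have := star_left_conjugate_le_conjugate hxyy v
    rw [hvsa] at this
    calc v * x * v ≤ v * (y + y) * v := this
      _ = v * y * v + v * y * v := by noncomm_ring
  -- positivity of the conjugated elements
  have hpos1 : (0 : B) ≤ v * (x * x) * v := by
    have : (0 : B) ≤ x * x := by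
      nth_rewrite 1 [← hxsa]
      exact star_mul_self_nonneg x
    have h := star_left_conjugate_nonneg this v
    rwa [hvsa] at h
  have hpos2 : (0 : B) ≤ v * x * v := by
    have h := star_left_conjugate_nonneg hx01.1 v
    rwa [hvsa] at h
  -- norm chain
  have N1 : ‖v * (x * x) * v‖ ≤ ‖v * x * v‖ :=
    CStarAlgebra.norm_le_norm_of_nonneg_of_le hpos1 hconj1
  have N2 : ‖v * x * v‖ ≤ ‖v * y * v + v * y * v‖ :=
    CStarAlgebra.norm_le_norm_of_nonneg_of_le hpos2 hconj2
  have N3 : ‖v * y * v + v * y * v‖ ≤ 2 * ‖v * y * v‖ := by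
    calc ‖v * y * v + v * y * v‖ ≤ ‖v * y * v‖ + ‖v * y * v‖ := norm_add_le _ _
      _ = 2 * ‖v * y * v‖ := by ring
  have N4 : ‖v * y * v‖ ≤ ‖y * v‖ := by
    calc ‖v * y * v‖ = ‖v * (y * v)‖ := by rw [mul_assoc]
      _ ≤ ‖v‖ * ‖y * v‖ := norm_mul_le _ _
      _ ≤ 1 * ‖y * v‖ := by
          apply mul_le_mul_of_nonneg_right hnv (norm_nonneg _)
      _ = ‖y * v‖ := one_mul _
  calc ‖a - a * u‖ ^ 2 = ‖v * (x * x) * v‖ := by rw [hna', hsq]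
    _ ≤ ‖v * x * v‖ := N1
    _ ≤ ‖v * y * v + v * y * v‖ := N2
    _ ≤ 2 * ‖v * y * v‖ := N3
    _ ≤ 2 * ‖y * v‖ := by linarith
    _ = 2 * ‖c - c * u‖ := by rw [hnc']
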